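/- arXiv:1303.3654 — 2 statements merged into one kernel-verified Lean document; each statement's English description precedes it below -/
import Mathlib

section
/- Let X be a real Banach space, let Y be a reflexive real Banach space with dual Y*, let φ ∈ Γ(Y), and let f : X → Y* be Lipschitz continuous around x̄ ∈ X and strictly (Fréchet) differentiable at x̄ with surjective derivative ∇f(x̄) : X → Y*. Define the solution map S : X ⇉ Y by S(x) = {y ∈ Y : 0 ∈ f(x) + ∂φ(y)}, and let ȳ ∈ S(x̄). Then S is calm at x̄ for ȳ if and only if there exist a neighborhood U of ȳ in Y and a constant c > 0 such that φ(y) ≥ φ(ȳ) + ⟨−f(x̄), y − ȳ⟩ + c·d(y, (∂φ)⁻¹(−f(x̄)))² for all y ∈ U. -/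
/-!
Both conditions are equivalent to metric subregularity of `∂φ` at `ȳ` for `g = -f(x̄)`.
Since `∇f(x̄)` is surjective, Graves' theorem makes `f` open at a linear rate around `x̄`, which
turns calmness of `S = (∂φ)⁻¹ ∘ (-f)` into subregularity of `∂φ`; conversely
`f x - f x̄ = O(x - x̄)` turns subregularity back into calmness.

Quadratic growth gives subregularity by adding up three subgradient inequalities. Conversely, if
growth with constant `c` failed at `y`, with `d = d(y, (∂φ)⁻¹(g))`, then Ekeland's principle
applied to the excess `φ - φ(ȳ) - ⟨g, · - ȳ⟩` followed by a Hahn–Banach separation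
(the Brøndsted–Rockafellar argument) yields a point `z` with `‖z - y‖ < d / 2` and a subgradient
`w ∈ ∂φ(z)` with `‖w - g‖ ≤ 2cd`; for small `c` subregularity then puts `z` within `d / 2` of
`(∂φ)⁻¹(g)`, which is absurd.
-/

open Topology Filter Metric Set

/-- The convex subdifferential of an extended-real-valued function `φ` at `y`. -/
noncomputable def subdiff {Y : Type*} [NormedAddCommGroup Y] [NormedSpace ℝ Y]
    (φ : Y → EReal) (y : Y) : Set (Y →L[ℝ] ℝ) :=
  {p | φ y ≠ ⊤ ∧ ∀ z : Y, φ y + ((p (z - y) : ℝ) : EReal) ≤ φ z}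

section Ekeland

variable {Y : Type*} [PseudoMetricSpace Y]

def ekelandSet (k : Y → ℝ) (ε : ℝ) (w : Y) : Set Y := {z | k z + ε * dist z w ≤ k w}

theorem self_mem_ekelandSet (k : Y → ℝ) (ε : ℝ) (w : Y) : w ∈ ekelandSet k ε w := by
  simp [ekelandSet]

theorem ekelandSet_subset {k : Y → ℝ} {ε : ℝ} (hε : 0 ≤ ε) {w z : Y}
    (hz : z ∈ ekelandSet k ε w) : ekelandSet k ε z ⊆ ekelandSet k ε w := by
  intro v (hv : k v + ε * dist v z ≤ k z)
  have hz : k z + ε * dist z w ≤ k w := hz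
  show k v + ε * dist v w ≤ k w
  nlinarith [dist_triangle v z w]

theorem LowerSemicontinuous.isClosed_ekelandSet {k : Y → ℝ} (hk : LowerSemicontinuous k)
    (ε : ℝ) (w : Y) : IsClosed (ekelandSet k ε w) :=
  (hk.add (continuous_const.mul (continuous_id.dist continuous_const)).lowerSemicontinuous)
    |>.isClosed_preimage (k w)

theorem BddBelow.exists_forall_le_add_ekelandSet {k : Y → ℝ} (hbdd : BddBelow (range k))
    (ε : ℝ) (w : Y) {δ : ℝ} (hδ : 0 < δ) :
    ∃ z ∈ ekelandSet k ε w, ∀ v ∈ ekelandSet k ε w, k z ≤ k v + δ := by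
  obtain ⟨_, ⟨z, hz, rfl⟩, hlt⟩ := exists_lt_of_csInf_lt
    ⟨_, mem_image_of_mem k (self_mem_ekelandSet k ε w)⟩ (lt_add_of_pos_right _ hδ)
  exact ⟨z, hz, fun v hv => hlt.le.trans (add_le_add_left
    (csInf_le (hbdd.mono (image_subset_range _ _)) (mem_image_of_mem k hv)) _)⟩

theorem LowerSemicontinuous.exists_ekeland_point [CompleteSpace Y] {k : Y → ℝ}
    (hk : LowerSemicontinuous k) (hbdd : BddBelow (range k)) (y : Y) {ε : ℝ} (hε : 0 < ε) :
    ∃ z, k z + ε * dist z y ≤ k y ∧ ∀ z', k z ≤ k z' + ε * dist z' z := by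
  set S := ekelandSet k ε
  choose next next_mem next_le using fun (n : ℕ) (w : Y) =>
    hbdd.exists_forall_le_add_ekelandSet ε w (by positivity : (0 : ℝ) < (1 / 2) ^ n)
  let u : ℕ → Y := fun n => Nat.rec y next n
  have chain {n m : ℕ} (hnm : n ≤ m) : u m ∈ S (u n) := by
    induction m, hnm using Nat.le_induction with
    | base => exact self_mem_ekelandSet k ε _
    | succ m _ ih => exact ekelandSet_subset hε.le ih (next_mem m (u m))
  -- `u (n + 1)` is a `2⁻ⁿ`-minimizer of `k` on `S (u n)`, which contains `S (u (n + 1))`.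
  have dist_le {n m : ℕ} (hnm : n < m) : ε * dist (u m) (u (n + 1)) ≤ (1 / 2) ^ n := by
    have h1 : k (u m) + ε * dist (u m) (u (n + 1)) ≤ k (u (n + 1)) := chain hnm
    linarith [next_le n (u n) (u m) (chain hnm.le)]
  have cauchy : CauchySeq u := by
    refine Metric.cauchySeq_iff'.2 fun δ hδ => ?_
    obtain ⟨N, hN⟩ := exists_pow_lt_of_lt_one (mul_pos hε hδ) (by norm_num : (1 / 2 : ℝ) < 1)
    refine ⟨N + 1, fun m hm => ?_⟩
    have := dist_le (Nat.lt_of_succ_le hm)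
    exact lt_of_mul_lt_mul_left (by linarith) hε.le
  obtain ⟨z, hz⟩ := cauchySeq_tendsto_of_complete cauchy
  have mem_S (n : ℕ) : z ∈ S (u n) :=
    (hk.isClosed_ekelandSet ε _).mem_of_tendsto hz (eventually_atTop.2 ⟨n, fun m => chain⟩)
  refine ⟨z, mem_S 0, fun z' => le_of_not_gt fun hlt => ?_⟩
  have hz' (n : ℕ) : k z ≤ k z' + (1 / 2) ^ n := by
    have h1 : k z + ε * dist z (u (n + 1)) ≤ k (u (n + 1)) := mem_S (n + 1)
    have h2 := next_le n (u n) z' (ekelandSet_subset hε.le (mem_S n) hlt.le)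
    nlinarith [dist_nonneg (x := z) (y := u (n + 1))]
  have hlim : Tendsto (fun n : ℕ => k z' + (1 / 2 : ℝ) ^ n) atTop (𝓝 (k z')) := by
    simpa using tendsto_const_nhds.add (tendsto_pow_atTop_nhds_zero_of_lt_one
      (by norm_num : (0 : ℝ) ≤ 1 / 2) (by norm_num))
  nlinarith [ge_of_tendsto' hlim hz', dist_nonneg (x := z') (y := z)]

theorem LowerSemicontinuous.exists_ekeland_point_ereal [CompleteSpace Y] {k : Y → EReal}
    (hk : LowerSemicontinuous k) (hk0 : ∀ z, 0 ≤ k z) {y : Y} (hy : k y ≠ ⊤) {ε : ℝ}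
    (hε : 0 < ε) :
    ∃ z, k z ≠ ⊤ ∧ (k z).toReal + ε * dist z y ≤ (k y).toReal ∧
      ∀ z', k z' ≠ ⊤ → (k z).toReal ≤ (k z').toReal + ε * dist z' z := by
  -- Truncating at `k y + 1` gives a real lower semicontinuous function that agrees with `k`
  -- on `{v | k v ≤ k y}`.
  set T : ENNReal := (k y).toENNReal + 1
  have hT : T ≠ ⊤ := ENNReal.add_ne_top.2 ⟨EReal.toENNReal_ne_top_iff.2 hy, ENNReal.one_ne_top⟩
  set k' : Y → ℝ := fun v => ENNReal.truncateToReal T (k v).toENNReal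
  have hk' : LowerSemicontinuous k' :=
    (ENNReal.continuous_truncateToReal hT).comp_lowerSemicontinuous
      (EReal.continuous_toENNReal.comp_lowerSemicontinuous hk
        fun _ _ => EReal.toENNReal_le_toENNReal) (ENNReal.monotone_truncateToReal hT)
  have k'_eq {v : Y} (hv : (k v).toENNReal ≤ T) : k' v = (k v).toReal := by
    show ENNReal.truncateToReal T _ = _
    rw [ENNReal.truncateToReal_eq_toReal hT hv, EReal.toReal_toENNReal (hk0 v)]
  have k'_le {v : Y} (hv : k v ≠ ⊤) : k' v ≤ (k v).toReal := by
    rw [← EReal.toReal_toENNReal (hk0 v)]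
    show ENNReal.truncateToReal T _ ≤ _
    exact ENNReal.toReal_mono (EReal.toENNReal_ne_top_iff.2 hv) (min_le_right _ _)
  obtain ⟨z, hzy, hz⟩ :=
    hk'.exists_ekeland_point ⟨0, forall_mem_range.2 fun _ => ENNReal.truncateToReal_nonneg⟩ y hε
  rw [k'_eq le_self_add] at hzy
  have hzT : (k z).toENNReal < T := by
    by_contra! h
    have h1 : k' z = (k y).toReal + 1 := by
      simp only [k', ENNReal.truncateToReal, min_eq_left h, T]
      rw [ENNReal.toReal_add (EReal.toENNReal_ne_top_iff.2 hy) ENNReal.one_ne_top,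
        EReal.toReal_toENNReal (hk0 y), ENNReal.toReal_one]
    nlinarith [dist_nonneg (x := z) (y := y)]
  rw [k'_eq hzT.le] at hzy
  refine ⟨z, EReal.toENNReal_ne_top_iff.1 (hzT.trans_le le_top).ne, hzy, fun z' hz' => ?_⟩
  calc (k z).toReal = k' z := (k'_eq hzT.le).symm
    _ ≤ k' z' + ε * dist z' z := hz z'
    _ ≤ (k z').toReal + ε * dist z' z := by gcongr; exact k'_le hz'

end Ekeland

section Separation

variable {Y : Type*} [NormedAddCommGroup Y] [NormedSpace ℝ Y]

theorem geometric_hahn_banach_open_nonvertical {O E : Set (Y × ℝ)} (hOc : Convex ℝ O)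
    (hOo : IsOpen O) (hE : Convex ℝ E) (hOE : Disjoint O E) {z : Y} {t₁ t₂ : ℝ}
    (h₁ : (z, t₁) ∈ O) (h₂ : (z, t₂) ∈ E) (ht : t₁ ≤ t₂) :
    ∃ (L : Y →L[ℝ] ℝ) (u : ℝ), (∀ p ∈ O, L p.1 + p.2 < u) ∧ ∀ p ∈ E, u ≤ L p.1 + p.2 := by
  obtain ⟨F, u, hFO, hFE⟩ := geometric_hahn_banach_open hOc hOo hE hOE
  set s := F (0, 1)
  have hF (p : Y × ℝ) : F p = F (p.1, 0) + p.2 * s := by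
    conv_lhs => rw [show p = (p.1, 0) + p.2 • (0, 1) by ext <;> simp]
    rw [map_add, map_smul, smul_eq_mul]
  have hs : 0 < s := by
    have h := (hFO _ h₁).trans_le (hFE _ h₂)
    rw [hF (z, t₁), hF (z, t₂)] at h
    by_contra! hs
    nlinarith [mul_le_mul_of_nonpos_right ht hs]
  have hL (p : Y × ℝ) : s⁻¹ * F (p.1, 0) + p.2 = F p / s := by
    rw [hF p]
    field_simp
  refine ⟨s⁻¹ • F.comp (ContinuousLinearMap.inl ℝ Y ℝ), u / s, fun p hp => ?_, fun p hp => ?_⟩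
  · simpa [hL] using div_lt_div_of_pos_right (hFO p hp) hs
  · simpa [hL] using div_le_div_of_nonneg_right (hFE p hp) hs.le

theorem ContinuousLinearMap.norm_le_of_forall_le {f : Y →L[ℝ] ℝ} {C : ℝ} (hC : 0 ≤ C)
    (h : ∀ x, f x ≤ C * ‖x‖) : ‖f‖ ≤ C :=
  f.opNorm_le_bound hC fun x => abs_le.2 ⟨by linarith [map_neg f x ▸ norm_neg x ▸ h (-x)], h x⟩

theorem ConvexOn.exists_subgradient_norm_sub_le {D : Set Y} {ψ : Y → ℝ} (hψ : ConvexOn ℝ D ψ)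
    {z : Y} (hz : z ∈ D) (g : Y →L[ℝ] ℝ) {ε : ℝ} (hε : 0 ≤ ε)
    (hmin : ∀ v ∈ D, ψ z + g (v - z) ≤ ψ v + ε * dist v z) :
    ∃ w : Y →L[ℝ] ℝ, ‖w - g‖ ≤ ε ∧ ∀ v ∈ D, ψ z + w (v - z) ≤ ψ v := by
  set c : Y → ℝ := fun v => g v + (ψ z - g z) - ε * dist v z
  have hcc : ConcaveOn ℝ univ c :=
    ((g.toLinearMap.concaveOn convex_univ).add_const _).sub ((convexOn_univ_dist z).smul hε)
  obtain ⟨L, u, hO, hE⟩ := geometric_hahn_banach_open_nonvertical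
    (by simpa using hcc.convex_strict_hypograph)
    (isOpen_lt continuous_snd ((by fun_prop : Continuous c).comp continuous_fst))
    hψ.convex_epigraph
    (disjoint_left.2 fun p (hpO : p.2 < c p.1) hpE => by
      linarith [hmin p.1 hpE.1, hpE.2, map_sub g p.1 z])
    (z := z) (t₁ := ψ z - 1) (t₂ := ψ z) (by simp [c]) ⟨hz, le_rfl⟩ (by linarith)
  have hOle (v : Y) : L v + c v ≤ u :=
    le_of_forall_pos_lt_add fun δ hδ => by linarith [hO (v, c v - δ) (by simp [hδ])]
  have hzu : L z + ψ z ≤ u := by simpa [c] using hOle z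
  refine ⟨-L, ContinuousLinearMap.norm_le_of_forall_le hε fun x => ?_, fun v hv => ?_⟩
  · have := hOle (z - x)
    simp only [c, map_sub, dist_eq_norm, sub_sub_cancel_left, norm_neg] at this
    simp only [sub_apply, neg_apply]
    linarith [hE (z, ψ z) ⟨hz, le_rfl⟩]
  · have := hE (v, ψ v) ⟨hv, le_rfl⟩
    simp only [neg_apply, map_sub]
    linarith

end Separation

theorem EReal.add_coe_le_iff {a b : EReal} (ha : a ≠ ⊤) (ha' : a ≠ ⊥) (hb : b ≠ ⊥) (r : ℝ) :
    a + r ≤ b ↔ (b ≠ ⊤ → a.toReal + r ≤ b.toReal) := by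
  lift a to ℝ using ⟨ha, ha'⟩
  induction b using EReal.rec with
  | bot => exact absurd rfl hb
  | coe b => norm_cast; simp
  | top => simp

section Subdiff

variable {Y : Type*} [NormedAddCommGroup Y] [NormedSpace ℝ Y] {φ : Y → EReal}

theorem mem_subdiff_iff (hφ : ∀ y, φ y ≠ ⊥) {p : Y →L[ℝ] ℝ} {y : Y} :
    p ∈ subdiff φ y ↔ φ y ≠ ⊤ ∧ ∀ z, φ z ≠ ⊤ → (φ y).toReal + p (z - y) ≤ (φ z).toReal :=
  and_congr_right fun hy => forall_congr' fun z => EReal.add_coe_le_iff hy (hφ y) (hφ z) _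

theorem convexOn_toReal_of_ereal (hφ : ∀ y, φ y ≠ ⊥)
    (hconv : ∀ y z : Y, ∀ a b : ℝ, 0 ≤ a → 0 ≤ b → a + b = 1 →
      φ (a • y + b • z) ≤ (a : EReal) * φ y + (b : EReal) * φ z) :
    ConvexOn ℝ {y | φ y ≠ ⊤} fun y => (φ y).toReal := by
  have key {y z : Y} (hy : φ y ≠ ⊤) (hz : φ z ≠ ⊤) {a b : ℝ} (ha : 0 ≤ a) (hb : 0 ≤ b)
      (hab : a + b = 1) :
      φ (a • y + b • z) ≤ ((a * (φ y).toReal + b * (φ z).toReal : ℝ) : EReal) := by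
    rw [EReal.coe_add, EReal.coe_mul, EReal.coe_mul, EReal.coe_toReal hy (hφ y),
      EReal.coe_toReal hz (hφ z)]
    exact hconv y z a b ha hb hab
  refine ⟨fun y hy z hz a b ha hb hab => ne_top_of_le_ne_top (EReal.coe_ne_top _)
    (key hy hz ha hb hab), fun y hy z hz a b ha hb hab => ?_⟩
  simpa only [smul_eq_mul, EReal.toReal_coe] using
    EReal.toReal_le_toReal (key hy hz ha hb hab) (hφ _) (EReal.coe_ne_top _)

theorem exists_mem_subdiff_norm_sub_le [CompleteSpace Y] (hφ : ∀ y, φ y ≠ ⊥)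
    (hlsc : LowerSemicontinuous φ)
    (hconv : ConvexOn ℝ {y | φ y ≠ ⊤} fun y => (φ y).toReal)
    {g : Y →L[ℝ] ℝ} {ybar y : Y} (hg : g ∈ subdiff φ ybar) (hy : φ y ≠ ⊤) {ε : ℝ}
    (hε : 0 < ε) :
    ∃ z, ∃ w ∈ subdiff φ z, ‖w - g‖ ≤ ε ∧
      ε * dist z y ≤ (φ y).toReal - (φ ybar).toReal - g (y - ybar) := by
  rw [mem_subdiff_iff hφ] at hg
  set ℓ : Y → ℝ := fun v => (φ ybar).toReal + g (v - ybar)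
  set k : Y → EReal := fun v => φ v + ((-ℓ v : ℝ) : EReal)
  have k_eq {v : Y} (hv : φ v ≠ ⊤) : k v = (((φ v).toReal - ℓ v : ℝ) : EReal) := by
    simp only [k, sub_eq_add_neg, EReal.coe_add, EReal.coe_toReal hv (hφ v)]
  have k_ne_top {v : Y} : k v ≠ ⊤ ↔ φ v ≠ ⊤ := by
    refine ⟨fun h hv => h ?_, fun hv => k_eq hv ▸ EReal.coe_ne_top _⟩
    simp [k, hv]
  have hk : LowerSemicontinuous k :=
    hlsc.add' (continuous_coe_real_ereal.comp (by fun_prop)).lowerSemicontinuous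
      fun v => EReal.continuousAt_add (Or.inr (EReal.coe_ne_bot _)) (Or.inr (EReal.coe_ne_top _))
  have hk0 (v : Y) : 0 ≤ k v := by
    by_cases hv : φ v = ⊤
    · simp [k, hv]
    · rw [k_eq hv, EReal.coe_nonneg, sub_nonneg]
      exact hg.2 v hv
  obtain ⟨z, hz, hzy, hzmin⟩ := hk.exists_ekeland_point_ereal hk0 (k_ne_top.2 hy) hε
  rw [k_eq (k_ne_top.1 hz), k_eq hy, EReal.toReal_coe, EReal.toReal_coe] at hzy
  obtain ⟨w, hw, hsub⟩ := hconv.exists_subgradient_norm_sub_le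
    (k_ne_top.1 hz) g hε.le fun v hv => by
      have := hzmin v (k_ne_top.2 hv)
      rw [k_eq (k_ne_top.1 hz), k_eq hv, EReal.toReal_coe, EReal.toReal_coe] at this
      simp only [ℓ, map_sub] at this ⊢
      linarith
  refine ⟨z, w, (mem_subdiff_iff hφ).2 ⟨k_ne_top.1 hz, hsub⟩, hw, ?_⟩
  simp only [ℓ] at hzy
  linarith [hg.2 z (k_ne_top.1 hz)]

end Subdiff

section Regularity

variable {X Y E : Type*} [NormedAddCommGroup X]

def IsCalmAt [PseudoMetricSpace Y] (S : X → Set Y) (xbar : X) (ybar : Y) : Prop :=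
  ∃ κ > (0 : ℝ), ∃ U ∈ 𝓝 xbar, ∃ V ∈ 𝓝 ybar, ∀ x ∈ U, ∀ y : Y, y ∈ S x → y ∈ V →
    infDist y (S xbar) ≤ κ * ‖x - xbar‖

def IsMetricallySubregularAt [PseudoMetricSpace Y] [PseudoMetricSpace E] (T : Y → Set E)
    (ybar : Y) (g : E) : Prop :=
  ∃ κ > (0 : ℝ), ∃ U ∈ 𝓝 ybar, ∃ W ∈ 𝓝 g, ∀ y ∈ U, ∀ w ∈ T y, w ∈ W →
    infDist y {y' | g ∈ T y'} ≤ κ * dist w g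

variable [NormedAddCommGroup E]

theorem HasStrictFDerivAt.exists_eventually_exists_preimage {𝕜 : Type*}
    [NontriviallyNormedField 𝕜] [NormedSpace 𝕜 X] [CompleteSpace X] [NormedSpace 𝕜 E]
    [CompleteSpace E] {F : X → E} {A : X →L[𝕜] E} {a : X}
    (hF : HasStrictFDerivAt F A a) (hA : Function.Surjective A) :
    ∃ M > 0, ∀ᶠ p in 𝓝 (F a), ∃ x, F x = p ∧ ‖x - a‖ ≤ M * dist p (F a) := by
  set B := A.nonlinearRightInverseOfSurjective (LinearMap.range_eq_top.2 hA)
  have hB : 0 < B.nnnorm := A.nonlinearRightInverseOfSurjective_nnnorm_pos _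
  set c : NNReal := B.nnnorm⁻¹ / 2
  have hc : 0 < (c : ℝ) := by positivity
  obtain ⟨s, hs, happrox⟩ := hF.approximates_deriv_on_nhds (Or.inr hc)
  obtain ⟨δ, hδ, hδs⟩ := nhds_basis_closedBall.mem_iff.1 hs
  refine ⟨c⁻¹, inv_pos.2 hc, ?_⟩
  filter_upwards [closedBall_mem_nhds (F a) (mul_pos hc hδ)] with p hp
  have hr : dist p (F a) / c ≤ δ := (div_le_iff₀' hc).2 hp
  obtain ⟨x, hx, rfl⟩ := (happrox.mono_set ((closedBall_subset_closedBall hr).trans hδs))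
    |>.surjOn_closedBall_of_nonlinearRightInverse B (by positivity) subset_rfl
    (show p ∈ closedBall (F a) (((B.nnnorm : ℝ)⁻¹ - c) * (dist p (F a) / c)) by
      rw [mem_closedBall, show (B.nnnorm : ℝ)⁻¹ - c = c by push_cast [c]; ring,
        mul_div_cancel₀ _ hc.ne'])
  refine ⟨x, rfl, ?_⟩
  rw [← dist_eq_norm, inv_mul_eq_div]
  exact hx

variable [PseudoMetricSpace Y]

theorem IsCalmAt.isMetricallySubregularAt {T : Y → Set E} {F : X → E} {xbar : X} {ybar : Y}
    {M : ℝ} (hM : 0 < M)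
    (hF : ∀ᶠ p in 𝓝 (F xbar), ∃ x, F x = p ∧ ‖x - xbar‖ ≤ M * dist p (F xbar))
    (h : IsCalmAt (fun x => {y | F x ∈ T y}) xbar ybar) :
    IsMetricallySubregularAt T ybar (F xbar) := by
  obtain ⟨κ, hκ, U, hU, V, hV, hcalm⟩ := h
  obtain ⟨ρ, hρ, hρU⟩ := nhds_basis_closedBall.mem_iff.1 hU
  refine ⟨κ * M, mul_pos hκ hM, V, hV, _,
    hF.and (closedBall_mem_nhds (F xbar) (div_pos hρ hM)), fun y hy w hw hwW => ?_⟩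
  obtain ⟨⟨x, rfl, hx⟩, hxρ⟩ := hwW
  have hxU : x ∈ U := hρU <| mem_closedBall_iff_norm.2 <|
    hx.trans ((le_div_iff₀' hM).1 hxρ)
  calc infDist y _ ≤ κ * ‖x - xbar‖ := hcalm x hxU y hw hy
    _ ≤ κ * (M * dist (F x) (F xbar)) := by gcongr
    _ = κ * M * dist (F x) (F xbar) := by ring

theorem IsMetricallySubregularAt.isCalmAt {T : Y → Set E} {F : X → E} {xbar : X} {ybar : Y}
    (hF : (fun x => F x - F xbar) =O[𝓝 xbar] fun x => x - xbar)
    (h : IsMetricallySubregularAt T ybar (F xbar)) :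
    IsCalmAt (fun x => {y | F x ∈ T y}) xbar ybar := by
  obtain ⟨κ, hκ, V, hV, W, hW, hsub⟩ := h
  obtain ⟨L, hL, hFL⟩ := hF.exists_pos
  have hFW : ∀ᶠ x in 𝓝 xbar, F x ∈ W :=
    (tendsto_sub_nhds_zero_iff.1 (hF.trans_tendsto (tendsto_sub_nhds_zero_iff.2 tendsto_id)))
      |>.eventually_mem hW
  refine ⟨κ * L, mul_pos hκ hL, _, hFW.and hFL.bound, V, hV, fun x hx y hy hyV => ?_⟩
  calc infDist y _ ≤ κ * dist (F x) (F xbar) := hsub y hyV (F x) hy hx.1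
    _ ≤ κ * (L * ‖x - xbar‖) := by rw [dist_eq_norm]; gcongr; exact hx.2
    _ = κ * L * ‖x - xbar‖ := by ring

end Regularity

section QuadraticGrowth

variable {Y : Type*} [NormedAddCommGroup Y] [NormedSpace ℝ Y] {φ : Y → EReal}
  {g : Y →L[ℝ] ℝ} {ybar : Y}

def HasQuadraticGrowthAt (φ : Y → EReal) (g : Y →L[ℝ] ℝ) (ybar : Y) : Prop :=
  ∃ U ∈ 𝓝 ybar, ∃ c > (0 : ℝ), ∀ y ∈ U,
    φ ybar + ((g (y - ybar) + c * infDist y {y' | g ∈ subdiff φ y'} ^ 2 : ℝ) : EReal) ≤ φ y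

theorem mul_sq_infDist_le_of_growth (hφ : ∀ y, φ y ≠ ⊥) {c : ℝ} {y yh : Y}
    {w : Y →L[ℝ] ℝ}
    (hgrow : φ ybar + ((g (y - ybar) + c * infDist y {y' | g ∈ subdiff φ y'} ^ 2 : ℝ) : EReal)
      ≤ φ y)
    (hw : w ∈ subdiff φ y) (hyh : g ∈ subdiff φ yh) :
    c * infDist y {y' | g ∈ subdiff φ y'} ^ 2 ≤ ‖w - g‖ * dist y yh := by
  rw [mem_subdiff_iff hφ] at hw hyh
  have hybar : φ ybar ≠ ⊤ := by
    intro h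
    rw [h, EReal.top_add_coe, top_le_iff] at hgrow
    exact hw.1 hgrow
  have h1 := (EReal.add_coe_le_iff hybar (hφ _) (hφ _) _).1 hgrow hw.1
  have h2 := hyh.2 ybar hybar
  have h3 := hw.2 yh hyh.1
  have h4 := (w - g).le_opNorm (y - yh)
  simp only [sub_apply, map_sub] at h1 h2 h3 h4
  rw [Real.norm_eq_abs] at h4
  rw [dist_eq_norm]
  linarith [le_abs_self (w y - g y - (w yh - g yh))]

theorem HasQuadraticGrowthAt.isMetricallySubregularAt (hφ : ∀ y, φ y ≠ ⊥)
    (h : HasQuadraticGrowthAt φ g ybar) : IsMetricallySubregularAt (subdiff φ) ybar g := by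
  obtain ⟨U, hU, c, hc, hgrow⟩ := h
  refine ⟨c⁻¹, inv_pos.2 hc, U, hU, univ, univ_mem, fun y hy w hw _ => ?_⟩
  set C := {y' | g ∈ subdiff φ y'}
  rcases (infDist_nonneg (x := y) (s := C)).eq_or_lt with hd | hd
  · rw [← hd]
    positivity
  have hC : C.Nonempty := nonempty_iff_ne_empty.2 fun h => by simp [h] at hd
  have : Nonempty C := hC.to_subtype
  have key : c * infDist y C * infDist y C ≤ dist w g * infDist y C := by
    conv_rhs => rw [infDist_eq_iInf, Real.mul_iInf_of_nonneg dist_nonneg]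
    refine le_ciInf fun yh => ?_
    rw [mul_assoc, ← sq, dist_eq_norm]
    exact mul_sq_infDist_le_of_growth hφ (hgrow y hy) hw yh.2
  rw [le_inv_mul_iff₀ hc]
  exact le_of_mul_le_mul_right key hd

theorem IsMetricallySubregularAt.hasQuadraticGrowthAt [CompleteSpace Y] (hφ : ∀ y, φ y ≠ ⊥)
    (hlsc : LowerSemicontinuous φ)
    (hconv : ConvexOn ℝ {y | φ y ≠ ⊤} fun y => (φ y).toReal)
    (hg : g ∈ subdiff φ ybar) (h : IsMetricallySubregularAt (subdiff φ) ybar g) :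
    HasQuadraticGrowthAt φ g ybar := by
  obtain ⟨κ, hκ, U, hU, W, hW, hsub⟩ := h
  obtain ⟨r₁, hr₁, hr₁U⟩ := nhds_basis_ball.mem_iff.1 hU
  obtain ⟨r, hr, hrW⟩ := nhds_basis_closedBall.mem_iff.1 hW
  set c := min (1 / (4 * κ)) (r / r₁)
  have hcκ : κ * c ≤ 1 / 4 := by
    have := mul_le_mul_of_nonneg_left (min_le_left (1 / (4 * κ)) (r / r₁)) hκ.le
    rwa [show κ * (1 / (4 * κ)) = 1 / 4 by field_simp] at this
  have hcr : c * r₁ ≤ r := (le_div_iff₀ hr₁).1 (min_le_right _ _)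
  refine ⟨ball ybar (r₁ / 2), ball_mem_nhds _ (half_pos hr₁), c, by positivity, fun y hy => ?_⟩
  set C := {y' | g ∈ subdiff φ y'}
  set d := infDist y C
  rw [EReal.add_coe_le_iff hg.1 (hφ _) (hφ _)]
  intro hyt
  by_contra! hlt
  have hexcess := ((mem_subdiff_iff hφ).1 hg).2 y hyt
  have hd : 0 < d := by
    by_contra! hd
    nlinarith [infDist_nonneg (x := y) (s := C)]
  have hdy : d < r₁ / 2 := (infDist_le_dist_of_mem (show ybar ∈ C from hg)).trans_lt hy
  -- Brøndsted–Rockafellar at tolerance `2 c d` produces a point `z` too close to `y` for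
  -- subregularity to hold there.
  obtain ⟨z, w, hw, hwg, hzy⟩ := exists_mem_subdiff_norm_sub_le hφ hlsc hconv hg hyt
    (ε := 2 * c * d) (by positivity)
  have hzy' : dist z y < d / 2 := by
    by_contra! h
    nlinarith [mul_le_mul_of_nonneg_left h (by positivity : (0 : ℝ) ≤ 2 * c * d)]
  have hzU : z ∈ U := hr₁U (by
    rw [mem_ball] at hy ⊢
    linarith [dist_triangle z y ybar])
  have hwW : w ∈ W := hrW (by
    rw [mem_closedBall, dist_eq_norm]
    nlinarith)
  have h1 := hsub z hzU w hw hwW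
  have h2 : d ≤ infDist z C + dist y z := infDist_le_infDist_add_dist
  rw [dist_eq_norm] at h1
  rw [dist_comm] at h2
  nlinarith [mul_le_mul_of_nonneg_left hwg hκ.le]

end QuadraticGrowth

theorem stmt_14_general {X Y : Type*}
    [NormedAddCommGroup X] [NormedSpace ℝ X] [CompleteSpace X]
    [NormedAddCommGroup Y] [NormedSpace ℝ Y] [CompleteSpace Y]
    (φ : Y → EReal)
    (hne_bot : ∀ y, φ y ≠ ⊥)
    (hlsc : LowerSemicontinuous φ)
    (hconv : ∀ y z : Y, ∀ a b : ℝ, 0 ≤ a → 0 ≤ b → a + b = 1 →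
      φ (a • y + b • z) ≤ (a : EReal) * φ y + (b : EReal) * φ z)
    (f : X → (Y →L[ℝ] ℝ)) (xbar : X) (ybar : Y)
    (A : X →L[ℝ] (Y →L[ℝ] ℝ)) (hA : HasStrictFDerivAt f A xbar)
    (hAsurj : Function.Surjective ⇑A)
    (hsol : -(f xbar) ∈ subdiff φ ybar) :
    (∃ κ > (0 : ℝ), ∃ U ∈ 𝓝 xbar, ∃ V ∈ 𝓝 ybar, ∀ x ∈ U, ∀ y : Y,
        -(f x) ∈ subdiff φ y → y ∈ V →
        infDist y {y' : Y | -(f xbar) ∈ subdiff φ y'} ≤ κ * ‖x - xbar‖) ↔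
    (∃ U' ∈ 𝓝 ybar, ∃ c > (0 : ℝ), ∀ y ∈ U',
        φ ybar + (((-(f xbar)) (y - ybar)
            + c * (infDist y {y' : Y | -(f xbar) ∈ subdiff φ y'}) ^ 2 : ℝ) : EReal)
          ≤ φ y) := by
  have hF : HasStrictFDerivAt (fun x => -(f x)) (-A) xbar := hA.neg
  obtain ⟨M, hM, hopen⟩ := hF.exists_eventually_exists_preimage fun p =>
    (hAsurj (-p)).imp fun x hx => by simp [hx]
  have hcalm : IsCalmAt (fun x => {y | -(f x) ∈ subdiff φ y}) xbar ybar ↔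
      IsMetricallySubregularAt (subdiff φ) ybar (-(f xbar)) :=
    ⟨IsCalmAt.isMetricallySubregularAt hM hopen,
      fun h => h.isCalmAt hF.hasFDerivAt.isBigO_sub⟩
  have hconv' := convexOn_toReal_of_ereal hne_bot hconv
  exact hcalm.trans ⟨fun h => h.hasQuadraticGrowthAt hne_bot hlsc hconv' hsol,
    HasQuadraticGrowthAt.isMetricallySubregularAt hne_bot⟩

/-- Let `X` be a Banach space, `Y` a reflexive Banach space, `φ ∈ Γ(Y)`,
and `f : X → Y*` Lipschitz around `x̄` and strictly differentiable at `x̄` with surjective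
derivative `A = ∇f(x̄)`. Let `S(x) = {y : 0 ∈ f(x) + ∂φ(y)}` and `ȳ ∈ S(x̄)`. Then `S` is
calm at `x̄` for `ȳ` (i.e. for some `κ > 0` and neighborhoods `U` of `x̄`, `V` of `ȳ`,
`e(S(x) ∩ V, S(x̄)) ≤ κ·‖x - x̄‖` on `U`, stated pointwise over `y ∈ S(x) ∩ V`) if and
only if there are a neighborhood `U'` of `ȳ` and `c > 0` with
`φ(y) ≥ φ(ȳ) + ⟨-f(x̄), y - ȳ⟩ + c·d(y, (∂φ)⁻¹(-f(x̄)))²` for all `y ∈ U'`. -/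
theorem stmt_14 {X Y : Type*}
    [NormedAddCommGroup X] [NormedSpace ℝ X] [CompleteSpace X]
    [NormedAddCommGroup Y] [NormedSpace ℝ Y] [CompleteSpace Y]
    (hrefl : Function.Surjective ⇑(NormedSpace.inclusionInDoubleDual ℝ Y))
    (φ : Y → EReal)
    (hproper : ∃ y, φ y ≠ ⊤) (hne_bot : ∀ y, φ y ≠ ⊥)
    (hlsc : LowerSemicontinuous φ)
    (hconv : ∀ y z : Y, ∀ a b : ℝ, 0 ≤ a → 0 ≤ b → a + b = 1 →
      φ (a • y + b • z) ≤ (a : EReal) * φ y + (b : EReal) * φ z)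
    (f : X → (Y →L[ℝ] ℝ)) (xbar : X) (ybar : Y)
    (hlip : ∃ t ∈ 𝓝 xbar, ∃ L : NNReal, LipschitzOnWith L f t)
    (A : X →L[ℝ] (Y →L[ℝ] ℝ)) (hA : HasStrictFDerivAt f A xbar)
    (hAsurj : Function.Surjective ⇑A)
    (hsol : -(f xbar) ∈ subdiff φ ybar) :
    (∃ κ > (0 : ℝ), ∃ U ∈ 𝓝 xbar, ∃ V ∈ 𝓝 ybar, ∀ x ∈ U, ∀ y : Y,
        -(f x) ∈ subdiff φ y → y ∈ V →
        infDist y {y' : Y | -(f xbar) ∈ subdiff φ y'} ≤ κ * ‖x - xbar‖) ↔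
    (∃ U' ∈ 𝓝 ybar, ∃ c > (0 : ℝ), ∀ y ∈ U',
        φ ybar + (((-(f xbar)) (y - ybar)
            + c * (infDist y {y' : Y | -(f xbar) ∈ subdiff φ y'}) ^ 2 : ℝ) : EReal)
          ≤ φ y) :=
  stmt_14_general φ hne_bot hlsc hconv f xbar ybar A hA hAsurj hsol
end

section
/- Let X be a real Banach space, let Y be a reflexive real Banach space with dual Y*, let φ ∈ Γ(Y), and let f : X × Y → Y* be Lipschitz continuous around a point (x̄, ȳ) satisfying 0 ∈ f(x̄, ȳ) + ∂φ(ȳ). Assume f is partially strictly differentiable at (x̄, ȳ) with respect to x uniformly in y, with partial derivative A = ∇ₓf(x̄, ȳ) : X → Y* surjective. Assume in addition that there exist constants c > 0, ℓ ≥ 0 with ℓ < c and a neighborhood W of ȳ such that (a) φ(y) ≥ φ(ȳ) + ⟨−f(x̄, ȳ), y − ȳ⟩ + c·‖y − ȳ‖² for all y ∈ W, and (b) ‖f(x, y) − f(x, y')‖ ≤ ℓ·‖y − y'‖ for all x near x̄ and y, y' near ȳ. Then the solution map S : X ⇉ Y defined by S(x) = {y ∈ Y : 0 ∈ f(x, y)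 + ∂φ(y)} has the isolated calmness property at x̄ for ȳ. -/
/-!
At a solution `y` of `0 ∈ f(x, y) + ∂φ(y)` the subgradient inequality for `-f(x, y)`, tested
at `ȳ`, added to the quadratic growth inequality at `y` gives
`c‖y - ȳ‖² ≤ ⟨f(x̄, ȳ) - f(x, y), y - ȳ⟩`. The partial derivative bounds the `x`-variation of `f`
by `(1 + ‖A‖)‖x - x̄‖` and hypothesis (b) its `y`-variation by `ℓ‖y - ȳ‖`, so
`(c - ℓ)‖y - ȳ‖ ≤ (1 + ‖A‖)‖x - x̄‖`.
-/

open Topology Filter Metric Set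

theorem EReal.add_nonpos_of_add_le_of_add_le {a b : EReal} {s r : ℝ} (ha : a ≠ ⊥) (ha' : a ≠ ⊤)
    (h₁ : a + s ≤ b) (h₂ : b + r ≤ a) : s + r ≤ 0 := by
  lift a to ℝ using ⟨ha', ha⟩
  induction b using EReal.rec with
  | bot => simp at h₁
  | top => simp at h₂
  | coe b =>
    norm_cast at h₁ h₂
    linarith

theorem sq_norm_le_of_mem_subdiff_of_growth {Y : Type*} [NormedAddCommGroup Y] [NormedSpace ℝ Y]
    {φ : Y → EReal} {p q : Y →L[ℝ] ℝ} {y ybar : Y} {c : ℝ} (hbot : φ y ≠ ⊥)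
    (hp : p ∈ subdiff φ y)
    (hgrowth : φ ybar + ((q (y - ybar) + c * ‖y - ybar‖ ^ 2 : ℝ) : EReal) ≤ φ y) :
    c * ‖y - ybar‖ ^ 2 ≤ (p - q) (y - ybar) := by
  have := EReal.add_nonpos_of_add_le_of_add_le hbot hp.1 (hp.2 ybar) hgrowth
  rw [← neg_sub y ybar, map_neg] at this
  simp only [sub_apply]
  linarith

theorem norm_le_of_norm_sub_apply_le {X F : Type*} [SeminormedAddCommGroup X] [NormedSpace ℝ X]
    [SeminormedAddCommGroup F] [NormedSpace ℝ F] (A : X →L[ℝ] F) {u : F} {v : X} {ε : ℝ}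
    (h : ‖u - A v‖ ≤ ε * ‖v‖) : ‖u‖ ≤ (ε + ‖A‖) * ‖v‖ :=
  calc ‖u‖ = ‖(u - A v) + A v‖ := by rw [sub_add_cancel]
    _ ≤ ε * ‖v‖ + ‖A‖ * ‖v‖ := (norm_add_le _ _).trans (add_le_add h (A.le_opNorm v))
    _ = (ε + ‖A‖) * ‖v‖ := by ring

theorem norm_le_div_of_mul_sq_le_apply {Y : Type*} [SeminormedAddCommGroup Y] [NormedSpace ℝ Y]
    {v : Y} {g : Y →L[ℝ] ℝ} {c ℓ K : ℝ} (hK : 0 ≤ K) (hℓc : ℓ < c)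
    (h : c * ‖v‖ ^ 2 ≤ g v) (hg : ‖g‖ ≤ K + ℓ * ‖v‖) : ‖v‖ ≤ K / (c - ℓ) := by
  rw [le_div_iff₀ (sub_pos.2 hℓc)]
  rcases (norm_nonneg v).eq_or_lt with hv | hv
  · rw [← hv, zero_mul]
    exact hK
  have : c * ‖v‖ ^ 2 ≤ (K + ℓ * ‖v‖) * ‖v‖ :=
    h.trans ((le_abs_self _).trans ((g.le_opNorm v).trans (by gcongr)))
  nlinarith

theorem stmt_15_general {X Y : Type*}
    [NormedAddCommGroup X] [NormedSpace ℝ X]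
    [NormedAddCommGroup Y] [NormedSpace ℝ Y]
    (φ : Y → EReal)
    (hne_bot : ∀ y, φ y ≠ ⊥)
    (f : X × Y → (Y →L[ℝ] ℝ)) (xbar : X) (ybar : Y)
    (A : X →L[ℝ] (Y →L[ℝ] ℝ))
    (hpartial : ∀ ε > (0 : ℝ), ∃ δ > (0 : ℝ), ∀ x x' : X, ∀ y : Y,
      ‖x - xbar‖ ≤ δ → ‖x' - xbar‖ ≤ δ → ‖y - ybar‖ ≤ δ →
      ‖f (x, y) - f (x', y) - A (x - x')‖ ≤ ε * ‖x - x'‖)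
    (c ℓ : ℝ) (hℓc : ℓ < c)
    (W : Set Y) (hW : W ∈ 𝓝 ybar)
    (hgrowth : ∀ y ∈ W,
      φ ybar + (((-(f (xbar, ybar))) (y - ybar) + c * ‖y - ybar‖ ^ 2 : ℝ) : EReal) ≤ φ y)
    (hliny : ∃ U0 ∈ 𝓝 xbar, ∃ W0 ∈ 𝓝 ybar, ∀ x ∈ U0, ∀ y ∈ W0, ∀ y' ∈ W0,
      ‖f (x, y) - f (x, y')‖ ≤ ℓ * ‖y - y'‖) :
    ∃ κ > (0 : ℝ), ∃ U ∈ 𝓝 xbar, ∃ V ∈ 𝓝 ybar, ∀ x ∈ U, ∀ y : Y,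
      -(f (x, y)) ∈ subdiff φ y → y ∈ V → ‖y - ybar‖ ≤ κ * ‖x - xbar‖ := by
  obtain ⟨δ, hδ, hpart⟩ := hpartial 1 one_pos
  obtain ⟨U0, hU0, W0, hW0, hlin⟩ := hliny
  refine ⟨(1 + ‖A‖) / (c - ℓ), div_pos (by positivity) (sub_pos.2 hℓc),
    U0 ∩ closedBall xbar δ, inter_mem hU0 (closedBall_mem_nhds _ hδ),
    W ∩ W0 ∩ closedBall ybar δ, inter_mem (inter_mem hW hW0) (closedBall_mem_nhds _ hδ), ?_⟩
  rintro x ⟨-, hxδ⟩ y hy ⟨⟨hyW, hyW0⟩, hyδ⟩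
  rw [mem_closedBall, dist_eq_norm] at hxδ hyδ
  have hfx : ‖f (x, y) - f (xbar, y)‖ ≤ (1 + ‖A‖) * ‖x - xbar‖ :=
    norm_le_of_norm_sub_apply_le A (hpart x xbar y hxδ (by simpa using hδ.le) hyδ)
  have hfy : ‖f (xbar, y) - f (xbar, ybar)‖ ≤ ℓ * ‖y - ybar‖ :=
    hlin xbar (mem_of_mem_nhds hU0) y hyW0 ybar (mem_of_mem_nhds hW0)
  have hf : ‖-f (x, y) - -f (xbar, ybar)‖ ≤ (1 + ‖A‖) * ‖x - xbar‖ + ℓ * ‖y - ybar‖ := by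
    rw [neg_sub_neg, norm_sub_rev]
    exact (norm_sub_le_norm_sub_add_norm_sub _ (f (xbar, y)) _).trans (add_le_add hfx hfy)
  rw [div_mul_eq_mul_div]
  exact norm_le_div_of_mul_sq_le_apply (by positivity) hℓc
    (sq_norm_le_of_mem_subdiff_of_growth (hne_bot y) hy (hgrowth y hyW)) hf

/-- Let `X` be a Banach space, `Y` a reflexive Banach space, `φ ∈ Γ(Y)`, and
`f : X × Y → Y*` Lipschitz around `(x̄, ȳ)` with `0 ∈ f(x̄, ȳ) + ∂φ(ȳ)`. Assume `f` is
partially strictly differentiable at `(x̄, ȳ)` with respect to `x` uniformly in `y`, with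
surjective partial derivative `A = ∇ₓf(x̄, ȳ)`. Assume moreover that there are `c > 0`,
`0 ≤ ℓ < c` and a neighborhood `W` of `ȳ` such that (a) the quadratic growth condition
`φ(y) ≥ φ(ȳ) + ⟨-f(x̄, ȳ), y - ȳ⟩ + c·‖y - ȳ‖²` holds on `W`, and (b)
`‖f(x, y) - f(x, y')‖ ≤ ℓ·‖y - y'‖` for `x` near `x̄` and `y, y'` near `ȳ`. Then the
solution map `S(x) = {y : 0 ∈ f(x, y) + ∂φ(y)}` has the isolated calmness property at `x̄`
for `ȳ`: for some `κ > 0` and neighborhoods `U` of `x̄`, `V` of `ȳ`,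
`‖y - ȳ‖ ≤ κ·‖x - x̄‖` for all `x ∈ U`, `y ∈ S(x) ∩ V`. -/
theorem stmt_15 {X Y : Type*}
    [NormedAddCommGroup X] [NormedSpace ℝ X] [CompleteSpace X]
    [NormedAddCommGroup Y] [NormedSpace ℝ Y] [CompleteSpace Y]
    (hrefl : Function.Surjective ⇑(NormedSpace.inclusionInDoubleDual ℝ Y))
    (φ : Y → EReal)
    (hproper : ∃ y, φ y ≠ ⊤) (hne_bot : ∀ y, φ y ≠ ⊥)
    (hlsc : LowerSemicontinuous φ)
    (hconv : ∀ y z : Y, ∀ a b : ℝ, 0 ≤ a → 0 ≤ b → a + b = 1 →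
      φ (a • y + b • z) ≤ (a : EReal) * φ y + (b : EReal) * φ z)
    (f : X × Y → (Y →L[ℝ] ℝ)) (xbar : X) (ybar : Y)
    (hsol : -(f (xbar, ybar)) ∈ subdiff φ ybar)
    (hlip : ∃ t ∈ 𝓝 (xbar, ybar), ∃ L : NNReal, LipschitzOnWith L f t)
    (A : X →L[ℝ] (Y →L[ℝ] ℝ))
    (hpartial : ∀ ε > (0 : ℝ), ∃ δ > (0 : ℝ), ∀ x x' : X, ∀ y : Y,
      ‖x - xbar‖ ≤ δ → ‖x' - xbar‖ ≤ δ → ‖y - ybar‖ ≤ δ →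
      ‖f (x, y) - f (x', y) - A (x - x')‖ ≤ ε * ‖x - x'‖)
    (hAsurj : Function.Surjective ⇑A)
    (c ℓ : ℝ) (hc : 0 < c) (hℓ : 0 ≤ ℓ) (hℓc : ℓ < c)
    (W : Set Y) (hW : W ∈ 𝓝 ybar)
    (hgrowth : ∀ y ∈ W,
      φ ybar + (((-(f (xbar, ybar))) (y - ybar) + c * ‖y - ybar‖ ^ 2 : ℝ) : EReal) ≤ φ y)
    (hliny : ∃ U0 ∈ 𝓝 xbar, ∃ W0 ∈ 𝓝 ybar, ∀ x ∈ U0, ∀ y ∈ W0, ∀ y' ∈ W0,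
      ‖f (x, y) - f (x, y')‖ ≤ ℓ * ‖y - y'‖) :
    ∃ κ > (0 : ℝ), ∃ U ∈ 𝓝 xbar, ∃ V ∈ 𝓝 ybar, ∀ x ∈ U, ∀ y : Y,
      -(f (x, y)) ∈ subdiff φ y → y ∈ V → ‖y - ybar‖ ≤ κ * ‖x - xbar‖ :=
  stmt_15_general φ hne_bot f xbar ybar A hpartial c ℓ hℓc W hW hgrowth hliny
end
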